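/- Let n be odd and Γ = R_n(a,r). Define a' = a if a is even and a' = a + n if a is odd, and r' = r if r is odd and r' = r + n if r is even (computed in Z_{2n}). Then CDC(Γ) is isomorphic to the Rose Window graph R_{2n}(a', r'), via the map u_{i,j} ↦ u_{θ(i,j)}, v_{i,j} ↦ v_{θ(i,j)+n} where θ : Z_n × Z_2 → Z_{2n} is the unique group isomorphism sending (1,1) to 1. -/

import Mathlib

open SimpleGraph

/-- The Rose Window graph `R_n(a,r)`. Vertices `Sum.inl i = uᵢ`, `Sum.inr i = vᵢ`. -/
def roseWindow (n : ℕ) (a r : ZMod n) : SimpleGraph (ZMod n ⊕ ZMod n) :=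
  SimpleGraph.fromRel (fun x y =>
    match x, y with
    | Sum.inl i, Sum.inl i' => i' = i + 1
    | Sum.inr i, Sum.inr i' => i' = i + r
    | Sum.inl i', Sum.inr i => i' = i ∨ i' = i + a
    | _, _ => False)

/-- The canonical double cover of a graph. -/
def cdc {V : Type*} (G : SimpleGraph V) : SimpleGraph (V × ZMod 2) where
  Adj x y := G.Adj x.1 y.1 ∧ x.2 ≠ y.2
  symm := ⟨fun x y h => ⟨h.1.symm, h.2.symm⟩⟩
  loopless := ⟨fun x h => h.2 rfl⟩

/-- The automorphism group of a graph, as a subgroup of the permutations of vertices. -/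
def autSubgroup {V : Type*} (G : SimpleGraph V) : Subgroup (Equiv.Perm V) where
  carrier := {σ | ∀ x y, G.Adj (σ x) (σ y) ↔ G.Adj x y}
  one_mem' := by intro x y; rfl
  mul_mem' := by
    intro σ τ hσ hτ x y
    simpa [Equiv.Perm.mul_apply] using (hσ (τ x) (τ y)).trans (hτ x y)
  inv_mem' := by
    intro σ hσ x y
    conv_rhs => rw [← (σ.apply_symm_apply x), ← (σ.apply_symm_apply y)]
    exact (hσ (σ⁻¹ x) (σ⁻¹ y)).symm

/-!
In the canonical double cover every edge flips the `ZMod 2` coordinate, so in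
`ZMod n × ZMod 2` the rim, hub and spoke edges of `CDC(R_n(a,r))` join pairs differing by
`±(1,1)`, by `±(r,1)`, and by `(0,1)` or `(0,1) + (a,0)`. For odd `n` the Chinese remainder
theorem gives an additive isomorphism `θ : ZMod n × ZMod 2 ≃+ ZMod (2n)` with `θ (c, c) = c`,
which sends these differences to `±1`, `±r'`, and `n` or `n + a'`: exactly the edge differences
of `R_{2n}(a',r')` once the `v`-vertices are shifted by `θ (0,1) = n`.
-/

open Sum

namespace roseWindow

variable {n : ℕ} {a r i i' : ZMod n}

theorem adj_inl_inl :
    (roseWindow n a r).Adj (inl i) (inl i') ↔ i ≠ i' ∧ (i' = i + 1 ∨ i = i' + 1) := by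
  simp [roseWindow]

theorem adj_inr_inr :
    (roseWindow n a r).Adj (inr i) (inr i') ↔ i ≠ i' ∧ (i' = i + r ∨ i = i' + r) := by
  simp [roseWindow]

theorem adj_inl_inr : (roseWindow n a r).Adj (inl i) (inr i') ↔ i = i' ∨ i = i' + a := by
  simp [roseWindow]

theorem adj_inr_inl : (roseWindow n a r).Adj (inr i') (inl i) ↔ i = i' ∨ i = i' + a := by
  simp [roseWindow]

end roseWindow

theorem ZMod.ne_iff_eq_add_one {j j' : ZMod 2} : j ≠ j' ↔ j' = j + 1 := by
  revert j j'; decide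

theorem ZMod.natCast_ite_add_self (p : Prop) [Decidable p] (a n : ℕ) :
    ((if p then a else a + n : ℕ) : ZMod n) = a := by
  split_ifs <;> simp

section AddGroup

variable {G : Type*} [AddGroup G]

theorem ne_and_eq_add_or_eq_add_iff {c x y : G} :
    x ≠ y ∧ (y = x + c ∨ x = y + c) ↔ c ≠ 0 ∧ (y = x + c ∨ x = y + c) := by
  constructor <;> rintro ⟨h, rfl | rfl⟩ <;> simp_all

theorem AddEquiv.ne_and_eq_add_or_eq_add_iff {H : Type*} [AddGroup H] (θ : G ≃+ H) {c x y : G} :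
    θ x ≠ θ y ∧ (θ y = θ x + θ c ∨ θ x = θ y + θ c) ↔ x ≠ y ∧ (y = x + c ∨ x = y + c) := by
  simp only [θ.injective.ne_iff, ← map_add, θ.injective.eq_iff]

theorem ne_and_eq_add_or_eq_add_and_ne_iff {c i i' : G} (hc : c ≠ 0) {j j' : ZMod 2} :
    (i ≠ i' ∧ (i' = i + c ∨ i = i' + c)) ∧ j ≠ j' ↔
      (i, j) ≠ (i', j') ∧ ((i', j') = (i, j) + (c, 1) ∨ (i, j) = (i', j') + (c, 1)) := by
  rw [ne_and_eq_add_or_eq_add_iff, ne_and_eq_add_or_eq_add_iff]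
  have hj : j = j' + 1 ↔ j' = j + 1 := by
    rw [← ZMod.ne_iff_eq_add_one, ne_comm, ZMod.ne_iff_eq_add_one]
  simp only [Prod.ext_iff, Prod.fst_add, Prod.snd_add, Prod.fst_zero, Prod.snd_zero, ne_eq,
    ZMod.ne_iff_eq_add_one, hj, hc, one_ne_zero, and_false, not_false_eq_true, true_and]
  tauto

theorem eq_or_eq_add_and_ne_iff {a i i' : G} {j j' : ZMod 2} :
    (i = i' ∨ i = i' + a) ∧ j ≠ j' ↔
      (i, j) = (i', j') + (0, 1) ∨ (i, j) = (i', j') + (0, 1) + (a, 0) := by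
  simp only [Prod.ext_iff, Prod.fst_add, Prod.snd_add, add_zero, ne_comm (a := j),
    ZMod.ne_iff_eq_add_one]
  tauto

end AddGroup

/-- `u_p ↦ u_{θ p}`, `v_p ↦ v_{θ p + t}`. -/
def cdcRoseWindowIso {n N : ℕ} {a r : ZMod n} {a' r' t : ZMod N}
    (θ : ZMod n × ZMod 2 ≃+ ZMod N) (hr : r ≠ 0) (h1 : θ (1, 1) = 1)
    (ha : θ (a, 0) = a') (hr' : θ (r, 1) = r') (ht : θ (0, 1) = t) :
    cdc (roseWindow n a r) ≃g roseWindow N a' r' where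
  toEquiv := (Equiv.sumProdDistrib _ _ _).trans
    (Equiv.sumCongr θ.toEquiv (θ.toEquiv.trans (Equiv.addRight t)))
  map_rel_iff' := by
    subst ha hr' ht
    have : Nontrivial (ZMod n) := ⟨⟨r, 0, hr⟩⟩
    rintro ⟨i | i, j⟩ ⟨i' | i', j'⟩ <;>
      simp only [Equiv.trans_apply, Equiv.sumProdDistrib_apply_left,
        Equiv.sumProdDistrib_apply_right, Equiv.sumCongr_apply, Sum.map_inl, Sum.map_inr,
        AddEquiv.toEquiv_eq_coe, AddEquiv.coe_toEquiv, Equiv.coe_addRight, cdc,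
        roseWindow.adj_inl_inl, roseWindow.adj_inr_inr, roseWindow.adj_inl_inr,
        roseWindow.adj_inr_inl]
    · rw [← h1, θ.ne_and_eq_add_or_eq_add_iff, ne_and_eq_add_or_eq_add_and_ne_iff one_ne_zero]
    · rw [← map_add, ← map_add, θ.injective.eq_iff, θ.injective.eq_iff, eq_or_eq_add_and_ne_iff]
    · rw [← map_add, ← map_add, θ.injective.eq_iff, θ.injective.eq_iff, ne_comm,
        eq_or_eq_add_and_ne_iff]
    · simp only [add_right_comm _ (θ (0, 1)), ne_eq, add_left_inj]
      rw [← ne_eq, θ.ne_and_eq_add_or_eq_add_iff, ne_and_eq_add_or_eq_add_and_ne_iff hr]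

theorem cdc_odd_is_roseWindow_general (n a r : ℕ) (hodd : Odd n)
    (hr : (r : ZMod n) ≠ 0) :
    ∃ θ : ZMod n × ZMod 2 ≃+ ZMod (2 * n),
      θ (1, 1) = 1 ∧
      ∃ e : cdc (roseWindow n a r) ≃g
          roseWindow (2 * n) (((if Even a then a else a + n : ℕ) : ZMod (2 * n)))
            (((if Odd r then r else r + n : ℕ) : ZMod (2 * n))),
        (∀ (i : ZMod n) (j : ZMod 2), e (Sum.inl i, j) = Sum.inl (θ (i, j))) ∧
        (∀ (i : ZMod n) (j : ZMod 2), e (Sum.inr i, j) = Sum.inr (θ (i, j) + n)) := by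
  let ψ : ZMod (2 * n) ≃+* ZMod n × ZMod 2 :=
    (ZMod.chineseRemainder hodd.coprime_two_left).trans RingEquiv.prodComm
  let θ : ZMod n × ZMod 2 ≃+ ZMod (2 * n) := ψ.symm.toAddEquiv
  have hθ : ∀ (c : ℕ) {p}, p = ((c : ZMod n), (c : ZMod 2)) → θ p = c := fun c _ hp =>
    ψ.symm_apply_eq.mpr (hp.trans (map_natCast ψ c).symm)
  have h1 : θ (1, 1) = 1 := by simpa using hθ 1 rfl
  have ha : θ (a, 0) = (if Even a then a else a + n : ℕ) := by
    refine hθ _ (Prod.ext (ZMod.natCast_ite_add_self _ _ _).symm ?_)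
    refine (ZMod.natCast_eq_zero_iff_even.mpr ?_).symm
    split_ifs with h
    exacts [h, (Nat.not_even_iff_odd.mp h).add_odd hodd]
  have hr' : θ (r, 1) = (if Odd r then r else r + n : ℕ) := by
    refine hθ _ (Prod.ext (ZMod.natCast_ite_add_self _ _ _).symm ?_)
    refine (ZMod.natCast_eq_one_iff_odd.mpr ?_).symm
    split_ifs with h
    exacts [h, (Nat.not_odd_iff_even.mp h).add_odd hodd]
  have ht : θ (0, 1) = n :=
    hθ n (by rw [ZMod.natCast_self, ZMod.natCast_eq_one_iff_odd.mpr hodd])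
  exact ⟨θ, h1, cdcRoseWindowIso θ hr h1 ha hr' ht, fun _ _ => rfl, fun _ _ => rfl⟩

/-- for odd `n`, `CDC(R_n(a,r)) ≅ R_{2n}(a',r')` via
`u_{i,j} ↦ u_{θ(i,j)}`, `v_{i,j} ↦ v_{θ(i,j)+n}`, where `θ : ℤ_n × ℤ₂ ≃ ℤ_{2n}` is the
group isomorphism with `θ(1,1) = 1`, `a' = a` or `a+n` (whichever is even) and
`r' = r` or `r+n` (whichever is odd). -/
theorem cdc_odd_is_roseWindow (n a r : ℕ) (hn : 3 ≤ n) (hodd : Odd n)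
    (ha : (a : ZMod n) ≠ 0) (hr : (r : ZMod n) ≠ 0) :
    ∃ θ : ZMod n × ZMod 2 ≃+ ZMod (2 * n),
      θ (1, 1) = 1 ∧
      ∃ e : cdc (roseWindow n a r) ≃g
          roseWindow (2 * n) (((if Even a then a else a + n : ℕ) : ZMod (2 * n)))
            (((if Odd r then r else r + n : ℕ) : ZMod (2 * n))),
        (∀ (i : ZMod n) (j : ZMod 2), e (Sum.inl i, j) = Sum.inl (θ (i, j))) ∧
        (∀ (i : ZMod n) (j : ZMod 2), e (Sum.inr i, j) = Sum.inr (θ (i, j) + n)) :=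
  cdc_odd_is_roseWindow_general n a r hodd hr
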